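/- Let G be a finite generalized dihedral group and let H be a nontrivial subgroup of G. Then H is a total perfect code of G if and only if H is an (a,b)-regular set of G for every pair of integers a, b with 0 ≤ a ≤ |H|−1 and 0 ≤ b ≤ |H|. -/

import Mathlib

open scoped Pointwise

/-- The Cayley graph of a group `G` with inverse-closed connection set `S`:
`x` and `y` are adjacent iff `x ≠ y` and `y * x⁻¹ ∈ S`. -/
def cayleyGraph {G : Type*} [Group G] (S : Set G) (hS : S = S⁻¹) : SimpleGraph G where
  Adj x y := x ≠ y ∧ y * x⁻¹ ∈ S
  symm := by
    refine ⟨?_⟩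
    rintro x y ⟨hne, hmem⟩
    refine ⟨hne.symm, ?_⟩
    rw [hS, Set.mem_inv]
    simpa using hmem
  loopless := by
    refine ⟨?_⟩
    rintro x ⟨hne, -⟩
    exact hne rfl

/-- `C` is an `(a,b)`-regular set in the graph `Γ`: `C` is a nonempty proper subset of the
vertex set, every vertex in `C` has exactly `a` neighbours in `C`, and every vertex outside
`C` has exactly `b` neighbours in `C`. -/
def IsRegularSetIn {V : Type*} (Γ : SimpleGraph V) (C : Set V) (a b : ℕ) : Prop :=
  C.Nonempty ∧ C ≠ Set.univ ∧
    (∀ v ∈ C, {u | u ∈ C ∧ Γ.Adj v u}.ncard = a) ∧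
    (∀ v ∉ C, {u | u ∈ C ∧ Γ.Adj v u}.ncard = b)

/-- `C` is an `(a,b)`-regular set of the group `G` if it is an `(a,b)`-regular set in some
Cayley graph of `G`.  A `(0,1)`-regular set of `G` is a perfect code of `G`, and a
`(1,1)`-regular set of `G` is a total perfect code of `G`. -/
def IsRegularSetOf {G : Type*} [Group G] (C : Set G) (a b : ℕ) : Prop :=
  ∃ (S : Set G) (hS : S = S⁻¹), (1 : G) ∉ S ∧ IsRegularSetIn (cayleyGraph S hS) C a b
/-- `G` is a generalized dihedral group: there are an abelian subgroup `A` of `G` and an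
element `y ∈ G` with `y² = e` and `y⁻¹xy = x⁻¹` for all `x ∈ A`, such that `G` is
generated by `A` and `y`. -/
def IsGeneralizedDihedral (G : Type*) [Group G] : Prop :=
  ∃ (A : Subgroup G) (y : G),
    (∀ a ∈ A, ∀ b ∈ A, a * b = b * a) ∧ y ^ 2 = 1 ∧
    (∀ x ∈ A, y⁻¹ * x * y = x⁻¹) ∧ Subgroup.closure ((A : Set G) ∪ {y}) = ⊤

/-!
For an inverse-closed `S ∌ 1`, the subgroup `H` is `(a, b)`-regular in `Cay(G, S)` iff `S` meets
`H` in `a` elements and every other left coset of `H` in `b` elements. In a generalized dihedral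
group with abelian part `A`, every element outside `A` is an involution, and for `x ∈ A` inversion
carries `x` from `xH` into `x⁻¹H`. So there is an involution `σ` on the cosets (`xH ↦ x⁻¹H` on
cosets meeting `A`, the identity on the others) such that every non-involution of a coset `C` is
inverted into `σ C`, and `S` can be built one orbit `{C, σ C}` at a time. For `σ C ≠ C` this is
always possible; a coset with `σ C = C` (such as `H`) is inverse-closed and has inverse-closed
subsets of every size once it contains an involution besides `1`. A total perfect code provides
one: it meets every coset in exactly one element, which is an involution if the coset is
inverse-closed.
-/

theorem Function.Involutive.exists_orbit_rep {β : Type*} {σ : β → β}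
    (hσ : Function.Involutive σ) :
    ∃ ρ : β → β, (∀ c, ρ c = c ∨ ρ c = σ c) ∧ ∀ c, ρ (σ c) = ρ c := by
  let : LinearOrder β := WellOrderingRel.isWellOrder.linearOrder
  exact ⟨fun c => min c (σ c), fun c => min_choice _ _, fun c => by simp only [hσ c, min_comm]⟩

namespace Set

variable {G : Type*} [Group G]

theorem exists_inv_eq_self_of_ncard_eq_one {T : Set G}
    (hT : T⁻¹ = T) (h : T.ncard = 1) : ∃ x ∈ T, x⁻¹ = x := by
  obtain ⟨x, rfl⟩ := ncard_eq_one.1 h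
  exact ⟨x, rfl, by simpa using hT⟩

variable [Finite G]

theorem exists_subset_inv_eq_ncard_eq {C : Set G} (hC : C⁻¹ = C) {x₀ : G} (hx₀ : x₀ ∈ C)
    (hx₀' : x₀⁻¹ = x₀) : ∀ n ≤ C.ncard, ∃ T ⊆ C, T⁻¹ = T ∧ T.ncard = n := by
  intro n
  induction n with
  | zero => exact fun _ => ⟨∅, empty_subset _, by simp, ncard_empty G⟩
  | succ n ih =>
    intro hn
    obtain ⟨T, hTC, hT, rfl⟩ := ih (by omega)
    obtain ⟨y, hyC, hyT⟩ := exists_mem_notMem_of_ncard_lt_ncard (by omega : T.ncard < C.ncard)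
    by_cases hinv : ∃ z ∈ C \ T, z⁻¹ = z
    · obtain ⟨z, ⟨hzC, hzT⟩, hz⟩ := hinv
      exact ⟨insert z T, insert_subset hzC hTC, by rw [inv_insert, hz, hT],
        ncard_insert_of_notMem hzT⟩
    · push Not at hinv
      -- every involution of `C` already lies in `T`, so trade `x₀` for the pair `y, y⁻¹`
      have hy : y⁻¹ ≠ y := hinv y ⟨hyC, hyT⟩
      have hx₀T : x₀ ∈ T := by_contra fun h => hinv x₀ ⟨hx₀, h⟩ hx₀'
      have hy'T : y⁻¹ ∉ T := fun h => hyT (by rw [← hT]; simpa using h)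
      refine ⟨insert y (insert y⁻¹ (T \ {x₀})), ?_, ?_, ?_⟩
      · exact insert_subset hyC (insert_subset (by rw [← hC]; simpa using hyC)
          (sdiff_subset.trans hTC))
      · rw [inv_insert, inv_insert, inv_inv, insert_comm, sdiff_eq, inter_inv, compl_inv,
          inv_singleton, hx₀', hT, ← sdiff_eq]
      · rw [ncard_insert_of_notMem (by simp [hy.symm, hyT]),
          ncard_insert_of_notMem (by simp [hy'T]), ncard_sdiff_singleton_of_mem hx₀T]
        have := (ncard_pos (toFinite T)).2 ⟨x₀, hx₀T⟩
        omega

theorem exists_subset_union_inv_eq_ncard_inter_eq {C D : Set G} (hCD : Disjoint C D)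
    (hC : ∀ x ∈ C, x⁻¹ = x ∨ x⁻¹ ∈ D) (hD : ∀ x ∈ D, x⁻¹ = x ∨ x⁻¹ ∈ C) :
    ∀ n ≤ C.ncard, n ≤ D.ncard →
      ∃ T ⊆ C ∪ D, T⁻¹ = T ∧ (T ∩ C).ncard = n ∧ (T ∩ D).ncard = n := by
  intro n
  induction n with
  | zero => exact fun _ _ => ⟨∅, empty_subset _, by simp, by simp, by simp⟩
  | succ n ih =>
    intro hnC hnD
    obtain ⟨T, hTCD, hT, hTC, hTD⟩ := ih (by omega) (by omega)
    have hinvT : ∀ {x}, x ∉ T → x⁻¹ ∉ T := fun hx h => hx (by rw [← hT]; simpa using h)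
    suffices h : ∃ p ∈ C \ T, ∃ q ∈ D \ T, p⁻¹ = p ∧ q⁻¹ = q ∨ q = p⁻¹ by
      obtain ⟨p, ⟨hpC, hpT⟩, q, ⟨hqD, hqT⟩, hpq⟩ := h
      have hpD : p ∉ D := disjoint_left.1 hCD hpC
      have hqC : q ∉ C := disjoint_right.1 hCD hqD
      refine ⟨insert p (insert q T), insert_subset (.inl hpC) (insert_subset (.inr hqD) hTCD),
        ?_, ?_, ?_⟩
      · rcases hpq with ⟨hp, hq⟩ | rfl
        · rw [inv_insert, inv_insert, hp, hq, hT]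
        · rw [inv_insert, inv_insert, inv_inv, hT, insert_comm]
      · rw [insert_inter_of_mem hpC, insert_inter_of_notMem hqC,
          ncard_insert_of_notMem (fun h => hpT h.1), hTC]
      · rw [insert_inter_of_notMem hpD, insert_inter_of_mem hqD,
          ncard_insert_of_notMem (fun h => hqT h.1), hTD]
    obtain ⟨p, hpC, hpT⟩ :=
      exists_mem_notMem_of_ncard_lt_ncard (by omega : (T ∩ C).ncard < C.ncard)
    obtain ⟨q, hqD, hqT⟩ :=
      exists_mem_notMem_of_ncard_lt_ncard (by omega : (T ∩ D).ncard < D.ncard)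
    replace hpT : p ∉ T := fun h => hpT ⟨h, hpC⟩
    replace hqT : q ∉ T := fun h => hqT ⟨h, hqD⟩
    by_cases hp : p⁻¹ = p
    · by_cases hq : q⁻¹ = q
      · exact ⟨p, ⟨hpC, hpT⟩, q, ⟨hqD, hqT⟩, .inl ⟨hp, hq⟩⟩
      · exact ⟨q⁻¹, ⟨(hD q hqD).resolve_left hq, hinvT hqT⟩, q, ⟨hqD, hqT⟩,
          .inr (inv_inv q).symm⟩
    · exact ⟨p, ⟨hpC, hpT⟩, p⁻¹, ⟨(hC p hpC).resolve_left hp, hinvT hpT⟩, .inr rfl⟩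

theorem exists_subset_inv_eq_ncard_inter_fiber {β : Type*} {X : Set G} (hX : X⁻¹ = X)
    (f : G → β) {σ : β → β} (hσ : Function.Involutive σ)
    (hf : ∀ x ∈ X, x⁻¹ = x ∨ f x⁻¹ = σ (f x))
    (hfix : ∀ c, (X ∩ f ⁻¹' {c})⁻¹ = X ∩ f ⁻¹' {c} → ∃ x ∈ X ∩ f ⁻¹' {c}, x⁻¹ = x)
    (n : β → ℕ) (hnσ : ∀ c, n (σ c) = n c) (hn : ∀ c, n c ≤ (X ∩ f ⁻¹' {c}).ncard) :
    ∃ S ⊆ X, S⁻¹ = S ∧ ∀ c, (S ∩ f ⁻¹' {c}).ncard = n c := by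
  set F : β → Set G := fun c => X ∩ f ⁻¹' {c}
  have hFinv : ∀ c, ∀ x ∈ F c, x⁻¹ = x ∨ x⁻¹ ∈ F (σ c) := by
    rintro c x ⟨hxX, rfl⟩
    refine (hf x hxX).imp_right fun h => ⟨?_, h⟩
    rw [← hX]
    simpa using hxX
  have hlocal : ∀ c, ∃ T ⊆ F c ∪ F (σ c), T⁻¹ = T ∧
      (T ∩ F c).ncard = n c ∧ (T ∩ F (σ c)).ncard = n c := by
    intro c
    by_cases hc : σ c = c
    · have hsub : (F c)⁻¹ ⊆ F c := fun x hx => by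
        rcases hFinv c _ hx with h | h
        · rw [inv_inv] at h
          rwa [h]
        · rwa [inv_inv, hc] at h
      have hFc : (F c)⁻¹ = F c := hsub.antisymm (inv_subset.1 hsub)
      obtain ⟨x₀, hx₀, hx₀'⟩ := hfix c hFc
      obtain ⟨T, hTF, hT, hTn⟩ := exists_subset_inv_eq_ncard_eq hFc hx₀ hx₀' (n c) (hn c)
      refine ⟨T, subset_union_of_subset_left hTF _, hT, ?_, ?_⟩ <;>
        simp only [hc, inter_eq_left.2 hTF, hTn]
    · have hdisj : Disjoint (F c) (F (σ c)) :=
        disjoint_left.2 fun x hx hx' => hc (hx'.2.symm.trans hx.2)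
      have hF' := hFinv (σ c)
      rw [hσ c] at hF'
      exact exists_subset_union_inv_eq_ncard_inter_eq hdisj (hFinv c) hF' (n c) (hn c)
        (hnσ c ▸ hn (σ c))
  choose T hTF hT hTc hTσ using hlocal
  obtain ⟨ρ, hρ, hρσ⟩ := hσ.exists_orbit_rep
  -- each `σ`-orbit `{c, σ c}` contributes the single set `T (ρ c)`
  have hTρ : ∀ c, T (ρ c) ⊆ F c ∪ F (σ c) := fun c => by
    rcases hρ c with h | h <;> rw [h]
    · exact hTF c
    · simpa only [hσ c, union_comm] using hTF (σ c)
  refine ⟨⋃ c, T (ρ c), iUnion_subset fun c => (hTρ c).trans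
    (union_subset inter_subset_left inter_subset_left), by simp only [iUnion_inv, hT], fun d => ?_⟩
  have hSd : (⋃ c, T (ρ c)) ∩ f ⁻¹' {d} = T (ρ d) ∩ F d := by
    ext x
    refine ⟨fun ⟨hx, hxd⟩ => ?_, fun ⟨hx, _, hxd⟩ => ⟨mem_iUnion.2 ⟨d, hx⟩, hxd⟩⟩
    obtain ⟨c, hxc⟩ := mem_iUnion.1 hx
    have hρcd : ρ c = ρ d := by
      rcases hTρ c hxc with ⟨-, hxc'⟩ | ⟨-, hxc'⟩
      · rw [← hxc', ← hxd]
      · rw [← hρσ c, ← hxc', ← hxd]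
    exact ⟨hρcd ▸ hxc, (hTρ c hxc).elim (·.1) (·.1), hxd⟩
  rw [hSd]
  rcases hρ d with h | h <;> rw [h]
  · exact hTc d
  · simpa only [hσ d, hnσ] using hTσ (σ d)

end Set

section CayleyGraph

variable {G : Type*} [Group G] {S : Set G} (hS : S = S⁻¹) (H : Subgroup G)

theorem ncard_adj_inter_subgroup (h1 : (1 : G) ∉ S) (v : G) :
    {u | u ∈ (H : Set G) ∧ (cayleyGraph S hS).Adj v u}.ncard =
      (S ∩ QuotientGroup.mk ⁻¹' {(v : G ⧸ H)}).ncard := by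
  have himage : S ∩ QuotientGroup.mk ⁻¹' {(v : G ⧸ H)} =
      (fun u => v * u⁻¹) '' {u | u ∈ (H : Set G) ∧ (cayleyGraph S hS).Adj v u} := by
    ext s
    simp only [cayleyGraph, Set.mem_inter_iff, Set.mem_preimage, Set.mem_singleton_iff,
      QuotientGroup.eq, Set.mem_image, Set.mem_ofPred_eq, SetLike.mem_coe]
    constructor
    · rintro ⟨hs, hsv⟩
      refine ⟨s⁻¹ * v, ⟨hsv, fun h => h1 ?_, ?_⟩, by group⟩
      · rwa [← inv_eq_one.1 (right_eq_mul.1 h)]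
      · rw [hS]
        simpa using hs
    · rintro ⟨u, ⟨hu, -, huv⟩, rfl⟩
      refine ⟨?_, by simpa using hu⟩
      rw [hS]
      simpa using huv
  rw [himage]
  exact (Set.ncard_image_of_injective _ fun x y h => by simpa using h).symm

open Classical in
theorem isRegularSetIn_cayleyGraph_subgroup_iff (h1 : (1 : G) ∉ S) (a b : ℕ) :
    IsRegularSetIn (cayleyGraph S hS) (H : Set G) a b ↔ (H : Set G) ≠ Set.univ ∧
      ∀ c : G ⧸ H,
        (S ∩ QuotientGroup.mk ⁻¹' {c}).ncard = if c = ((1 : G) : G ⧸ H) then a else b := by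
  have hmem : ∀ v : G, v ∈ (H : Set G) ↔ (v : G ⧸ H) = ((1 : G) : G ⧸ H) := fun v => by
    rw [QuotientGroup.eq]
    simp
  simp only [IsRegularSetIn, ncard_adj_inter_subgroup hS H h1, QuotientGroup.mk_surjective.forall]
  constructor
  · rintro ⟨-, hne, hin, hout⟩
    refine ⟨hne, fun v => ?_⟩
    split_ifs with hv
    exacts [hin v ((hmem v).2 hv), hout v (mt (hmem v).1 hv)]
  · rintro ⟨hne, h⟩
    refine ⟨⟨1, H.one_mem⟩, hne, fun v hv => ?_, fun v hv => ?_⟩ <;> rw [h v]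
    exacts [if_pos ((hmem v).1 hv), if_neg (mt (hmem v).2 hv)]

end CayleyGraph

namespace QuotientGroup

variable {G : Type*} [Group G] (A H : Subgroup G)

theorem ncard_preimage_mk_singleton (c : G ⧸ H) : (mk ⁻¹' {c} : Set G).ncard = Nat.card H := by
  rw [← Nat.card_coe_set_eq, card_preimage_mk, Nat.card_coe_set_eq, Set.ncard_singleton, mul_one]

-- on the cosets meeting `A` this is `x H ↦ x⁻¹ H`, well defined when `A` is abelian
open Classical in
noncomputable def cosetInvOn (c : G ⧸ H) : G ⧸ H :=
  if h : ∃ x ∈ A, (x : G ⧸ H) = c then ((h.choose⁻¹ : G) : G ⧸ H) else c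

variable {A}

theorem cosetInvOn_mk (hA : ∀ a ∈ A, ∀ b ∈ A, a * b = b * a) {x : G} (hx : x ∈ A) :
    cosetInvOn A H x = ↑x⁻¹ := by
  have h : ∃ x' ∈ A, (x' : G ⧸ H) = x := ⟨x, hx, rfl⟩
  obtain ⟨hx'A, hx'⟩ := h.choose_spec
  rw [cosetInvOn, dif_pos h]
  rw [QuotientGroup.eq] at hx' ⊢
  rw [inv_inv, hA _ hx'A _ (A.inv_mem hx)]
  simpa using H.inv_mem hx'

theorem cosetInvOn_involutive (hA : ∀ a ∈ A, ∀ b ∈ A, a * b = b * a) :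
    Function.Involutive (cosetInvOn A H) := by
  intro c
  by_cases h : ∃ x ∈ A, (x : G ⧸ H) = c
  · obtain ⟨x, hx, rfl⟩ := h
    rw [cosetInvOn_mk H hA hx, cosetInvOn_mk H hA (A.inv_mem hx), inv_inv]
  · have hc : cosetInvOn A H c = c := dif_neg h
    rw [hc, hc]

end QuotientGroup

section GeneralizedDihedral

variable {G : Type*} [Group G] {A : Subgroup G} {y : G}

theorem mul_eq_inv_mul_of_conj (hy : y ^ 2 = 1) (hconj : ∀ x ∈ A, y⁻¹ * x * y = x⁻¹) {x : G}
    (hx : x ∈ A) : y * x = x⁻¹ * y := by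
  rw [← hconj x hx, inv_eq_of_mul_eq_one_right (by rwa [← sq]), mul_assoc, mul_assoc, ← sq,
    hy, mul_one]

theorem mul_inv_eq_self_of_conj (hy : y ^ 2 = 1) (hconj : ∀ x ∈ A, y⁻¹ * x * y = x⁻¹) {u : G}
    (hu : u ∈ A) : (u * y)⁻¹ = u * y := by
  rw [mul_inv_rev, inv_eq_of_mul_eq_one_right (by rwa [← sq]),
    mul_eq_inv_mul_of_conj hy hconj (A.inv_mem hu), inv_inv]

theorem mem_or_exists_mul_of_closure_eq_top (hy : y ^ 2 = 1)
    (hconj : ∀ x ∈ A, y⁻¹ * x * y = x⁻¹) (hcl : Subgroup.closure ((A : Set G) ∪ {y}) = ⊤)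
    (z : G) : z ∈ A ∨ ∃ u ∈ A, z = u * y := by
  induction (hcl ▸ Subgroup.mem_top z : z ∈ Subgroup.closure _) using
    Subgroup.closure_induction with
  | mem x hx =>
    rcases hx with hx | rfl
    exacts [.inl hx, .inr ⟨1, A.one_mem, (one_mul x).symm⟩]
  | one => exact .inl A.one_mem
  | mul x z _ _ hx hz =>
    rcases hx with hx | ⟨u, hu, rfl⟩ <;> rcases hz with hz | ⟨v, hv, rfl⟩
    · exact .inl (A.mul_mem hx hz)
    · exact .inr ⟨x * v, A.mul_mem hx hv, (mul_assoc _ _ _).symm⟩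
    · exact .inr ⟨u * z⁻¹, A.mul_mem hu (A.inv_mem hz), by
        rw [mul_assoc, mul_eq_inv_mul_of_conj hy hconj hz, ← mul_assoc]⟩
    · have huv : u * y * (v * y) = u * v⁻¹ := by
        rw [show u * y * (v * y) = u * (y * v) * y by group, mul_eq_inv_mul_of_conj hy hconj hv,
          show u * (v⁻¹ * y) * y = u * v⁻¹ * (y * y) by simp only [mul_assoc], ← sq, hy,
          mul_one]
      exact .inl (huv ▸ A.mul_mem hu (A.inv_mem hv))
  | inv x _ hx =>
    rcases hx with hx | ⟨u, hu, rfl⟩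
    · exact .inl (A.inv_mem hx)
    · exact .inr ⟨u, hu, mul_inv_eq_self_of_conj hy hconj hu⟩

theorem IsGeneralizedDihedral.exists_subgroup (hG : IsGeneralizedDihedral G) :
    ∃ A : Subgroup G, (∀ a ∈ A, ∀ b ∈ A, a * b = b * a) ∧ ∀ z ∉ A, z⁻¹ = z := by
  obtain ⟨A, y, hA, hy, hconj, hcl⟩ := hG
  refine ⟨A, hA, fun z hz => ?_⟩
  obtain ⟨u, hu, rfl⟩ := (mem_or_exists_mul_of_closure_eq_top hy hconj hcl z).resolve_left hz
  exact mul_inv_eq_self_of_conj hy hconj hu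

end GeneralizedDihedral

open QuotientGroup in
theorem isRegularSetOf_of_isRegularSetOf_one_one {G : Type*} [Group G] [Finite G]
    {A : Subgroup G} (hA : ∀ a ∈ A, ∀ b ∈ A, a * b = b * a) (hinv : ∀ z ∉ A, z⁻¹ = z)
    {H : Subgroup G} (h : IsRegularSetOf (H : Set G) 1 1) {a b : ℕ}
    (ha : a ≤ Nat.card H - 1) (hb : b ≤ Nat.card H) : IsRegularSetOf (H : Set G) a b := by
  classical
  obtain ⟨S₀, hS₀, h1S₀, hreg⟩ := h
  obtain ⟨hHne, hS₀c⟩ := (isRegularSetIn_cayleyGraph_subgroup_iff hS₀ H h1S₀ 1 1).1 hreg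
  set X : Set G := {1}ᶜ
  have hX : X⁻¹ = X := by simp [X]
  have hXF : ∀ c : G ⧸ H, X ∩ mk ⁻¹' {c} = mk ⁻¹' {c} \ {1} := fun c => Set.inter_comm _ _
  have hfix : ∀ c : G ⧸ H, (X ∩ mk ⁻¹' {c})⁻¹ = X ∩ mk ⁻¹' {c} →
      ∃ x ∈ X ∩ mk ⁻¹' {c}, x⁻¹ = x := by
    intro c hc
    have hS₀X : S₀ ∩ (X ∩ mk ⁻¹' {c}) = S₀ ∩ mk ⁻¹' {c} := by
      rw [← Set.inter_assoc, Set.inter_eq_left.2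
        (show S₀ ⊆ X from fun x hx h => h1S₀ (Set.mem_singleton_iff.1 h ▸ hx))]
    obtain ⟨x, hx, hx'⟩ := Set.exists_inv_eq_self_of_ncard_eq_one
      (T := S₀ ∩ (X ∩ mk ⁻¹' {c})) (by rw [Set.inter_inv, ← hS₀, hc])
      (by rw [hS₀X, hS₀c c, ite_self])
    exact ⟨x, hx.2, hx'⟩
  have hσ1 : cosetInvOn A H ((1 : G) : G ⧸ H) = ((1 : G) : G ⧸ H) := by
    rw [cosetInvOn_mk H hA A.one_mem, inv_one]
  have hσ := cosetInvOn_involutive H hA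
  let n : G ⧸ H → ℕ := fun c => if c = ((1 : G) : G ⧸ H) then a else b
  have hnσ : ∀ c, n (cosetInvOn A H c) = n c := fun c => by
    simp only [n, hσ.injective.eq_iff' hσ1]
  have hn : ∀ c, n c ≤ (X ∩ mk ⁻¹' {c}).ncard := fun c => by
    simp only [n, hXF]
    split_ifs with hc
    · rwa [Set.ncard_sdiff_singleton_of_mem (show (1 : G) ∈ mk ⁻¹' {c} from hc.symm),
        ncard_preimage_mk_singleton]
    · rwa [Set.sdiff_singleton_eq_self fun h => hc (Set.mem_preimage.1 h).symm,
        ncard_preimage_mk_singleton]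
  obtain ⟨S, hSX, hS, hSc⟩ := Set.exists_subset_inv_eq_ncard_inter_fiber hX mk hσ
    (fun x _ => (em (x ∈ A)).symm.imp (hinv x) fun hx => (cosetInvOn_mk H hA hx).symm)
    hfix n hnσ hn
  exact ⟨S, hS.symm, fun h => hSX h rfl,
    (isRegularSetIn_cayleyGraph_subgroup_iff hS.symm H (fun h => hSX h rfl) a b).2 ⟨hHne, hSc⟩⟩

theorem statement_3 {G : Type*} [Group G] [Fintype G]
    (hG : IsGeneralizedDihedral G) (H : Subgroup G) (hH : H ≠ ⊥) :
    IsRegularSetOf (H : Set G) 1 1 ↔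
      ∀ a b : ℕ, a ≤ Nat.card H - 1 → b ≤ Nat.card H →
        IsRegularSetOf (H : Set G) a b := by
  obtain ⟨A, hA, hinv⟩ := hG.exists_subgroup
  have hH1 := (Subgroup.one_lt_card_iff_ne_bot H).2 hH
  exact ⟨fun h a b => isRegularSetOf_of_isRegularSetOf_one_one hA hinv h,
    fun h => h 1 1 (by omega) hH1.le⟩
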